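/- There exists a surjective algebra homomorphism η : 𝒪_q → F[z_1,z_2,...] that sends 𝒲_{-n} ↦ 0, 𝒲_{n+1} ↦ 0, 𝒢_n ↦ 𝒢_0·z_n, and 𝒢̃_n ↦ 𝒢̃_0·z_n for all n ∈ ℕ, where 𝒢_0 = 𝒢̃_0 = -(q-q^{-1})(q+q^{-1})² is a scalar and z_0 = 1. -/
import Mathlib


noncomputable section

/-- Commutator `[X,Y] = XY - YX`. -/
def br {A : Type*} [Ring A] (X Y : A) : A := X * Y - Y * X

/-- `q`-commutator `[X,Y]_q = q XY - q⁻¹ YX`. -/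
def qbr {F A : Type*} [Field F] [Ring A] [Algebra F A] (p : F) (X Y : A) : A :=
  p • (X * Y) - p⁻¹ • (Y * X)

/-- Index type for the alternating generators: `Wm k = 𝒲_{-k}`, `Wp k = 𝒲_{k+1}`,
`G k = 𝒢_{k+1}`, `Gt k = 𝒢̃_{k+1}`. -/
inductive AltGen : Type
  | Wm : ℕ → AltGen
  | Wp : ℕ → AltGen
  | G : ℕ → AltGen
  | Gt : ℕ → AltGen

namespace ACE

variable (F : Type*) [Field F] (q : F)

open AltGen FreeAlgebra

/-- The defining relations (3.1)–(3.11) of the alternating central extension `𝒪_q`,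
with `ρ = -(q²-q⁻²)²`.  Here `𝒲_0 = ι (Wm 0)`, `𝒲_1 = ι (Wp 0)`. -/
inductive AceRel : FreeAlgebra F AltGen → FreeAlgebra F AltGen → Prop
  | r1a (k : ℕ) : AceRel (br (ι F (Wm 0)) (ι F (Wp k)))
      (((q + q⁻¹)⁻¹) • (ι F (Gt k) - ι F (G k)))
  | r1b (k : ℕ) : AceRel (br (ι F (Wm k)) (ι F (Wp 0)))
      (((q + q⁻¹)⁻¹) • (ι F (Gt k) - ι F (G k)))
  | r2a (k : ℕ) : AceRel (qbr q (ι F (Wm 0)) (ι F (G k)))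
      ((-(q ^ 2 - q⁻¹ ^ 2) ^ 2) • ι F (Wm (k + 1)) - (-(q ^ 2 - q⁻¹ ^ 2) ^ 2) • ι F (Wp k))
  | r2b (k : ℕ) : AceRel (qbr q (ι F (Gt k)) (ι F (Wm 0)))
      ((-(q ^ 2 - q⁻¹ ^ 2) ^ 2) • ι F (Wm (k + 1)) - (-(q ^ 2 - q⁻¹ ^ 2) ^ 2) • ι F (Wp k))
  | r3a (k : ℕ) : AceRel (qbr q (ι F (G k)) (ι F (Wp 0)))
      ((-(q ^ 2 - q⁻¹ ^ 2) ^ 2) • ι F (Wp (k + 1)) - (-(q ^ 2 - q⁻¹ ^ 2) ^ 2) • ι F (Wm k))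
  | r3b (k : ℕ) : AceRel (qbr q (ι F (Wp 0)) (ι F (Gt k)))
      ((-(q ^ 2 - q⁻¹ ^ 2) ^ 2) • ι F (Wp (k + 1)) - (-(q ^ 2 - q⁻¹ ^ 2) ^ 2) • ι F (Wm k))
  | r4a (k l : ℕ) : AceRel (br (ι F (Wm k)) (ι F (Wm l))) 0
  | r4b (k l : ℕ) : AceRel (br (ι F (Wp k)) (ι F (Wp l))) 0
  | r5 (k l : ℕ) : AceRel (br (ι F (Wm k)) (ι F (Wp l)) + br (ι F (Wp k)) (ι F (Wm l))) 0
  | r6 (k l : ℕ) : AceRel (br (ι F (Wm k)) (ι F (G l)) + br (ι F (G k)) (ι F (Wm l))) 0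
  | r7 (k l : ℕ) : AceRel (br (ι F (Wm k)) (ι F (Gt l)) + br (ι F (Gt k)) (ι F (Wm l))) 0
  | r8 (k l : ℕ) : AceRel (br (ι F (Wp k)) (ι F (G l)) + br (ι F (G k)) (ι F (Wp l))) 0
  | r9 (k l : ℕ) : AceRel (br (ι F (Wp k)) (ι F (Gt l)) + br (ι F (Gt k)) (ι F (Wp l))) 0
  | r10a (k l : ℕ) : AceRel (br (ι F (G k)) (ι F (G l))) 0
  | r10b (k l : ℕ) : AceRel (br (ι F (Gt k)) (ι F (Gt l))) 0
  | r11 (k l : ℕ) : AceRel (br (ι F (Gt k)) (ι F (G l)) + br (ι F (G k)) (ι F (Gt l))) 0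

/-- The alternating central extension `𝒪_q` of the `q`-Onsager algebra. -/
abbrev Oq := RingQuot (AceRel F q)

/-- The images of the alternating generators in `𝒪_q`. -/
def gen (g : AltGen) : Oq F q :=
  RingQuot.mkAlgHom F (AceRel F q) (ι F g)

end ACE

open AltGen

/-- The generators `z_n` of `F[z_1, z_2, …]` (with the convention `z_0 = 1`). -/
def z (F : Type*) [Field F] : ℕ → MvPolynomial ℕ+ F
  | 0 => 1
  | (n + 1) => MvPolynomial.X ⟨n + 1, Nat.succ_pos n⟩

/-- The images of the generators in `F[z_1,z_2,…]`. -/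
def etaGen (F : Type*) [Field F] (q : F) : AltGen → MvPolynomial ℕ+ F
  | Wm _ => 0
  | Wp _ => 0
  | G k => (-(q - q⁻¹) * (q + q⁻¹) ^ 2) • z F (k + 1)
  | Gt k => (-(q - q⁻¹) * (q + q⁻¹) ^ 2) • z F (k + 1)

/-- There is a surjective algebra homomorphism `η : 𝒪_q → F[z_1,z_2,…]` sending
`𝒲_{-n} ↦ 0`, `𝒲_{n+1} ↦ 0`, `𝒢_n ↦ 𝒢_0 z_n` and `𝒢̃_n ↦ 𝒢̃_0 z_n`, where
`𝒢_0 = 𝒢̃_0 = -(q-q⁻¹)(q+q⁻¹)²`. -/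
theorem ace_exists_eta (F : Type*) [Field F] (q : F) (hq0 : q ≠ 0)
    (hq : ∀ n : ℕ, 0 < n → q ^ n ≠ 1) :
    ∃ η : ACE.Oq F q →ₐ[F] MvPolynomial ℕ+ F,
      Function.Surjective η ∧
      (∀ k : ℕ, η (ACE.gen F q (Wm k)) = 0) ∧
      (∀ k : ℕ, η (ACE.gen F q (Wp k)) = 0) ∧
      (∀ k : ℕ, η (ACE.gen F q (G k)) = (-(q - q⁻¹) * (q + q⁻¹) ^ 2) • z F (k + 1)) ∧
      (∀ k : ℕ, η (ACE.gen F q (Gt k)) = (-(q - q⁻¹) * (q + q⁻¹) ^ 2) • z F (k + 1)) := by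
  set c : F := -(q - q⁻¹) * (q + q⁻¹) ^ 2 with hc
  have hc0 : c ≠ 0 := by
    have h1 : q - q⁻¹ ≠ 0 := by
      intro h
      have : q ^ 2 = 1 := by
        field_simp at h
        linear_combination h
      exact hq 2 (by norm_num) this
    have h2 : q + q⁻¹ ≠ 0 := by
      intro h
      have h2' : q ^ 2 = -1 := by
        have := congrArg (· * q) h
        field_simp at this
        rw [pow_two]
        linear_combination this
      have : q ^ 4 = 1 := by
        have : q ^ 4 = (q ^ 2) ^ 2 := by ring
        rw [this, h2']; ring
      exact hq 4 (by norm_num) this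
    rw [hc]
    exact mul_ne_zero (neg_ne_zero.mpr h1) (pow_ne_zero 2 h2)
  have hrel : ∀ ⦃x y : FreeAlgebra F AltGen⦄, ACE.AceRel F q x y →
      (FreeAlgebra.lift F (etaGen F q)) x = (FreeAlgebra.lift F (etaGen F q)) y := by
    intro x y h
    induction h <;>
      simp [br, qbr, etaGen, mul_comm, sub_eq_zero]
  refine ⟨RingQuot.liftAlgHom F ⟨FreeAlgebra.lift F (etaGen F q), hrel⟩, ?_, ?_, ?_, ?_, ?_⟩
  · have hgen : ∀ g : AltGen,
        (RingQuot.liftAlgHom F ⟨FreeAlgebra.lift F (etaGen F q), hrel⟩) (ACE.gen F q g)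
          = etaGen F q g := by
      intro g
      show (RingQuot.liftAlgHom F ⟨FreeAlgebra.lift F (etaGen F q), hrel⟩)
          ((RingQuot.mkAlgHom F (ACE.AceRel F q)) (FreeAlgebra.ι F g)) = _
      rw [RingQuot.liftAlgHom_mkAlgHom_apply, FreeAlgebra.lift_ι_apply]
    rw [← AlgHom.range_eq_top, ← top_le_iff, ← MvPolynomial.adjoin_range_X]
    apply Algebra.adjoin_le
    rintro _ ⟨m, rfl⟩
    obtain ⟨k, hk⟩ := m
    cases k with
    | zero => exact absurd hk (lt_irrefl 0)
    | succ n =>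
      refine ⟨c⁻¹ • ACE.gen F q (G n), ?_⟩
      show (RingQuot.liftAlgHom F ⟨FreeAlgebra.lift F (etaGen F q), hrel⟩)
          (c⁻¹ • ACE.gen F q (G n)) = _
      rw [map_smul, hgen]
      show c⁻¹ • (c • z F (n + 1)) = _
      rw [smul_smul, inv_mul_cancel₀ hc0, one_smul]
      rfl
  all_goals
    intro k
    show (RingQuot.liftAlgHom F ⟨FreeAlgebra.lift F (etaGen F q), hrel⟩)
        ((RingQuot.mkAlgHom F (ACE.AceRel F q)) (FreeAlgebra.ι F _)) = _
    rw [RingQuot.liftAlgHom_mkAlgHom_apply, FreeAlgebra.lift_ι_apply]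
    rfl
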